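/- arXiv:2409.18540 — 7 statements merged into one kernel-verified Lean document; each statement's English description precedes it below -/
import Mathlib

section
/- Let p be a prime and j ≥ 1 an integer. For any finitely supported families (ε_i)_{i≥j} with ε_i ∈ {0,1} and (l_i)_{i≥j} with l_i ∈ ℕ, not all zero, set d = Σ_{i≥j} [(ε_i + l_i)(2^{i+1} − 2) + ε_i] and w = Σ_{i≥j} (ε_i + l_i)(2^i − 1) with l_j = 0 allowed. Then w > 0 and 2 ≤ d/w ≤ 2 + 1/(2^j − 1). -/
/-!
Since `2^(i+1) - 2 = 2 (2^i - 1)`, the degree is `d = 2w + S` with `S = ∑ ε_i`, so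
`d / w = 2 + S / w`. Every `ε_i ≠ 0` occurs with `i ≥ j` and contributes at least
`2^j - 1` to the weight, hence `(2^j - 1) S ≤ w`, i.e. `S / w ≤ 1 / (2^j - 1)`.
-/

open Finset

namespace MonomialRatio

variable (ε l : ℕ → ℕ) (s : Finset ℕ)

theorem two_pow_succ_sub_two (i : ℕ) : 2 ^ (i + 1) - 2 = 2 * (2 ^ i - 1) := by
  rw [Nat.mul_sub, pow_succ']

theorem degree_eq_two_mul_weight_add :
    ∑ i ∈ s, ((ε i + l i) * (2 ^ (i + 1) - 2) + ε i) =
      2 * ∑ i ∈ s, (ε i + l i) * (2 ^ i - 1) + ∑ i ∈ s, ε i := by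
  rw [mul_sum, ← sum_add_distrib]
  refine sum_congr rfl fun i _ => ?_
  rw [two_pow_succ_sub_two, mul_left_comm]

theorem mul_sum_le_weight (j : ℕ) (hlow : ∀ i ∈ s, i < j → ε i = 0) :
    (2 ^ j - 1) * ∑ i ∈ s, ε i ≤ ∑ i ∈ s, (ε i + l i) * (2 ^ i - 1) := by
  rw [mul_sum]
  refine sum_le_sum fun i hi => ?_
  rcases lt_or_ge i j with hij | hji
  · simp [hlow i hi hij]
  · rw [mul_comm]
    gcongr
    · exact Nat.le_add_right _ _
    · norm_num

theorem weight_pos {i : ℕ} (hi : i ∈ s) (hi0 : i ≠ 0) (hne : ε i ≠ 0 ∨ l i ≠ 0) :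
    0 < ∑ k ∈ s, (ε k + l k) * (2 ^ k - 1) := by
  refine sum_pos_iff.mpr ⟨i, hi, Nat.mul_pos (by omega) ?_⟩
  have := Nat.one_lt_two_pow hi0
  omega

theorem ratio_bounds {w S c : ℚ} (hw : 0 < w) (hS : 0 ≤ S) (hc : 0 < c) (hSw : c * S ≤ w) :
    2 ≤ (2 * w + S) / w ∧ (2 * w + S) / w ≤ 2 + 1 / c := by
  have hsplit : (2 * w + S) / w = 2 + S / w := by field_simp
  rw [hsplit]
  refine ⟨le_add_of_nonneg_right (div_nonneg hS hw.le), (add_le_add_iff_left 2).mpr ?_⟩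
  rw [div_le_div_iff₀ hw hc]
  linarith

end MonomialRatio

open MonomialRatio in
theorem stmt0_general (j : ℕ) (hj : 1 ≤ j)
    (ε l : ℕ → ℕ) (N : ℕ)
    (hsupp : ∀ i, N ≤ i → ε i = 0 ∧ l i = 0)
    (hlow : ∀ i, i < j → ε i = 0 ∧ l i = 0)
    (hne : ∃ i, ε i ≠ 0 ∨ l i ≠ 0)
    (d w : ℕ)
    (hd : d = ∑ i ∈ Finset.range N, ((ε i + l i) * (2 ^ (i + 1) - 2) + ε i))
    (hw : w = ∑ i ∈ Finset.range N, (ε i + l i) * (2 ^ i - 1)) :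
    0 < w ∧ 2 ≤ (d : ℚ) / (w : ℚ) ∧ (d : ℚ) / (w : ℚ) ≤ 2 + 1 / ((2 : ℚ) ^ j - 1) := by
  obtain ⟨i, hi⟩ := hne
  have hji : j ≤ i := by
    by_contra h
    have := hlow i (by omega)
    omega
  have hiN : i < N := by
    by_contra h
    have := hsupp i (by omega)
    omega
  have hwpos : 0 < w := hw ▸ weight_pos ε l _ (mem_range.mpr hiN) (by omega) hi
  have hdw : d = 2 * w + ∑ i ∈ range N, ε i := by
    rw [hd, hw, degree_eq_two_mul_weight_add]
  have hkey := mul_sum_le_weight ε l (range N) j fun i _ h => (hlow i h).1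
  rw [← hw] at hkey
  have hcast : ((2 ^ j - 1 : ℕ) : ℚ) = (2 : ℚ) ^ j - 1 := by
    rw [Nat.cast_sub Nat.one_le_two_pow]; push_cast; rfl
  have hc : (0 : ℚ) < (2 : ℚ) ^ j - 1 := by
    rw [← hcast]; exact_mod_cast Nat.sub_pos_of_lt (Nat.one_lt_two_pow (by omega))
  rw [hdw]
  push_cast
  refine ⟨hwpos, ratio_bounds (by exact_mod_cast hwpos) (by positivity) hc ?_⟩
  rw [← hcast]
  exact_mod_cast hkey

/-- Degree/weight ratio estimate for homogeneous monomials in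
`π_{*,*}(𝒜(2)/τ)/⟨τ_0,…,τ_{j−1},ξ_1,…,ξ_j⟩`. -/
theorem stmt0 (p : ℕ) (hp : p.Prime) (j : ℕ) (hj : 1 ≤ j)
    (ε l : ℕ → ℕ) (N : ℕ)
    (hε01 : ∀ i, ε i ≤ 1)
    (hsupp : ∀ i, N ≤ i → ε i = 0 ∧ l i = 0)
    (hlow : ∀ i, i < j → ε i = 0 ∧ l i = 0)
    (hlj : l j = 0)
    (hne : ∃ i, ε i ≠ 0 ∨ l i ≠ 0)
    (d w : ℕ)
    (hd : d = ∑ i ∈ Finset.range N, ((ε i + l i) * (2 ^ (i + 1) - 2) + ε i))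
    (hw : w = ∑ i ∈ Finset.range N, (ε i + l i) * (2 ^ i - 1)) :
    0 < w ∧ 2 ≤ (d : ℚ) / (w : ℚ) ∧ (d : ℚ) / (w : ℚ) ≤ 2 + 1 / ((2 : ℚ) ^ j - 1) :=
  stmt0_general j hj ε l N hsupp hlow hne d w hd hw
end

section
/- Let p be an odd prime. Let a be an integer with −(p−2) ≤ a ≤ 0, let i_1 < i_2 < … < i_n be positive integers, and let b_t ∈ {0,1}, c_t ∈ ℕ for 1 ≤ t ≤ n with b_1 ≠ 0 or c_1 ≠ 0. Set d = Σ_t [2(b_t + c_t)(p^{i_t} − 1) + b_t] and w = a + Σ_t (b_t + c_t)(p^{i_t} − 1). Then d > 0 and Q(i_1) ≤ w/d ≤ 1/2, where Q(i) = 1/2 − (p−2)/(2p^i − 2) − 1/(4p^i − 2). -/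
/-!
Write `S = ∑ (b_t + c_t)(p^{i_t} - 1)` and `B = ∑ b_t`, so that `d = 2S + B` and `w = a + S`, and
put `m = p^{i_1}`. Since `i_1` is the smallest index, `S ≥ m - 1` (from the first term) and
`S ≥ B(m - 1)`. The upper bound is `a ≤ 0 ≤ B`. For the lower bound, `d ≥ 2m - 2` gives
`(p - 2)/(2m - 2) · d ≥ p - 2 ≥ -a` and `d ≥ B(2m - 1)` gives `d/(4m - 2) ≥ B/2`, hence
`Q · d ≤ d/2 + a - B/2 = w`.
-/

open Finset

section Estimate

variable {K : Type*} [Field K] [LinearOrder K] [IsStrictOrderedRing K] {a p m S B : K}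

theorem add_div_two_mul_add_le_half (ha : a ≤ 0) (hB : 0 ≤ B) (hd : 0 < 2 * S + B) :
    (a + S) / (2 * S + B) ≤ 1 / 2 := by
  rw [div_le_iff₀ hd]
  linarith

theorem le_add_div_two_mul_add (hm : 1 < m) (hS : m - 1 ≤ S) (hSB : B * (m - 1) ≤ S)
    (hB : 0 ≤ B) (hp : 2 ≤ p) (ha : -(p - 2) ≤ a) :
    1 / 2 - (p - 2) / (2 * m - 2) - 1 / (4 * m - 2) ≤ (a + S) / (2 * S + B) := by
  have hd : 0 < 2 * S + B := by linarith
  have hp_le : p - 2 ≤ (p - 2) / (2 * m - 2) * (2 * S + B) :=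
    calc p - 2 = (p - 2) / (2 * m - 2) * (2 * m - 2) := by
          rw [div_mul_cancel₀ _ (by linarith)]
      _ ≤ (p - 2) / (2 * m - 2) * (2 * S + B) := by
          gcongr
          · exact div_nonneg (by linarith) (by linarith)
          · linarith
  have hB_le : B / 2 ≤ 1 / (4 * m - 2) * (2 * S + B) :=
    calc B / 2 = 1 / (4 * m - 2) * ((4 * m - 2) * (B / 2)) := by
          rw [← mul_assoc, one_div_mul_cancel (by linarith), one_mul]
      _ ≤ 1 / (4 * m - 2) * (2 * S + B) := by
          gcongr
          · exact div_nonneg zero_le_one (by linarith)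
          · linarith
  rw [le_div_iff₀ hd]
  linarith

end Estimate

theorem Finset.sum_two_mul_add_natCast_eq {R ι : Type*} [CommSemiring R] (s : Finset ι)
    (f g : ι → R) (b : ι → ℕ) :
    ∑ t ∈ s, (2 * f t * g t + b t) = 2 * ∑ t ∈ s, f t * g t + ∑ t ∈ s, (b t : R) := by
  rw [mul_sum, ← sum_add_distrib]
  exact sum_congr rfl fun t _ => by ring

section Sums

variable {K : Type*} [Field K] [LinearOrder K] [IsStrictOrderedRing K] {ι : Type*}
  {p : K} (idx : ι → ℕ) {t₀ : ι} (b c : ι → ℕ)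

theorem mul_pow_sub_one_nonneg (hp : 1 ≤ p) (t : ι) :
    0 ≤ ((b t : K) + c t) * (p ^ idx t - 1) :=
  mul_nonneg (by positivity) (sub_nonneg.mpr (one_le_pow₀ hp))

variable [Fintype ι]

theorem pow_sub_one_le_sum (hp : 1 ≤ p) (ht₀ : b t₀ ≠ 0 ∨ c t₀ ≠ 0) :
    p ^ idx t₀ - 1 ≤ ∑ t, ((b t : K) + c t) * (p ^ idx t - 1) := by
  have hbc : (1 : K) ≤ b t₀ + c t₀ := by
    have : 1 ≤ b t₀ + c t₀ := by omega
    exact_mod_cast this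
  calc p ^ idx t₀ - 1 ≤ ((b t₀ : K) + c t₀) * (p ^ idx t₀ - 1) :=
        le_mul_of_one_le_left (sub_nonneg.mpr (one_le_pow₀ hp)) hbc
    _ ≤ ∑ t, ((b t : K) + c t) * (p ^ idx t - 1) :=
        single_le_sum (fun t _ => mul_pow_sub_one_nonneg idx b c hp t) (mem_univ t₀)

theorem sum_mul_pow_sub_one_le_sum (hp : 1 ≤ p) (hmin : ∀ t, idx t₀ ≤ idx t) :
    (∑ t, (b t : K)) * (p ^ idx t₀ - 1) ≤ ∑ t, ((b t : K) + c t) * (p ^ idx t - 1) := by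
  rw [sum_mul]
  gcongr with t
  · exact sub_nonneg.mpr (one_le_pow₀ hp)
  · exact le_add_of_nonneg_right (Nat.cast_nonneg _)
  · exact hmin t

end Sums

theorem stmt2_general (p : ℕ)
    (a : ℤ) (ha1 : -((p : ℤ) - 2) ≤ a) (ha2 : a ≤ 0)
    (n : ℕ) (hn : 0 < n)
    (idx : Fin n → ℕ) (hmono : StrictMono idx) (hpos : ∀ t, 1 ≤ idx t)
    (b c : Fin n → ℕ)
    (hfirst : b ⟨0, hn⟩ ≠ 0 ∨ c ⟨0, hn⟩ ≠ 0)
    (d w : ℚ)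
    (hd : d = ∑ t, (2 * ((b t : ℚ) + (c t : ℚ)) * ((p : ℚ) ^ (idx t) - 1) + (b t : ℚ)))
    (hw : w = (a : ℚ) + ∑ t, ((b t : ℚ) + (c t : ℚ)) * ((p : ℚ) ^ (idx t) - 1)) :
    0 < d ∧
      (1 / 2 - ((p : ℚ) - 2) / (2 * (p : ℚ) ^ (idx ⟨0, hn⟩) - 2)
          - 1 / (4 * (p : ℚ) ^ (idx ⟨0, hn⟩) - 2)) ≤ w / d ∧
      w / d ≤ 1 / 2 := by
  have hp : (2 : ℚ) ≤ p := by exact_mod_cast (by omega : 2 ≤ p)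
  have hmin : ∀ t, idx ⟨0, hn⟩ ≤ idx t := fun t => hmono.monotone (Nat.zero_le t.val)
  have hm : 1 < (p : ℚ) ^ idx ⟨0, hn⟩ :=
    one_lt_pow₀ (by linarith) (Nat.one_le_iff_ne_zero.mp (hpos _))
  have hS := pow_sub_one_le_sum idx b c (by linarith : (1 : ℚ) ≤ p) hfirst
  have hSB := sum_mul_pow_sub_one_le_sum idx b c (by linarith : (1 : ℚ) ≤ p) hmin
  have hB : (0 : ℚ) ≤ ∑ t, (b t : ℚ) := sum_nonneg fun t _ => Nat.cast_nonneg _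
  have ha : (a : ℚ) ≤ 0 := by exact_mod_cast ha2
  rw [Finset.sum_two_mul_add_natCast_eq] at hd
  subst hd hw
  refine ⟨by linarith, le_add_div_two_mul_add hm hS hSB hB hp (by exact_mod_cast ha1),
    add_div_two_mul_add_le_half ha hB (by linarith)⟩

/-- Degree/weight estimate for monomials in the mod-p dual motivic Steenrod algebra
`π_{*,*}(𝒜(p)/τ^{p−1})`. -/
theorem stmt2 (p : ℕ) (hp : p.Prime) (hodd : Odd p)
    (a : ℤ) (ha1 : -((p : ℤ) - 2) ≤ a) (ha2 : a ≤ 0)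
    (n : ℕ) (hn : 0 < n)
    (idx : Fin n → ℕ) (hmono : StrictMono idx) (hpos : ∀ t, 1 ≤ idx t)
    (b c : Fin n → ℕ) (hb : ∀ t, b t ≤ 1)
    (hfirst : b ⟨0, hn⟩ ≠ 0 ∨ c ⟨0, hn⟩ ≠ 0)
    (d w : ℚ)
    (hd : d = ∑ t, (2 * ((b t : ℚ) + (c t : ℚ)) * ((p : ℚ) ^ (idx t) - 1) + (b t : ℚ)))
    (hw : w = (a : ℚ) + ∑ t, ((b t : ℚ) + (c t : ℚ)) * ((p : ℚ) ^ (idx t) - 1)) :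
    0 < d ∧
      (1 / 2 - ((p : ℚ) - 2) / (2 * (p : ℚ) ^ (idx ⟨0, hn⟩) - 2)
          - 1 / (4 * (p : ℚ) ^ (idx ⟨0, hn⟩) - 2)) ≤ w / d ∧
      w / d ≤ 1 / 2 :=
  stmt2_general p a ha1 ha2 n hn idx hmono hpos b c hfirst d w hd hw
end

section
/- Let p be an odd prime and j ≥ 0, k ≥ 1 integers. There do not exist a positive integer n and natural numbers m_1, …, m_n and w_1, …, w_n satisfying: Σ_h m_h = 2p^{j+k}, Σ_h w_h = p^k(p^j − 1), m_h ≥ 2p^{j+1} − 1 for all h, w_h ≥ p^{j+1} − p + 1 for all h, and (2p^{j+1} − 2p + 1)(m_h − 1) ≤ (4p^{j+1} − 4) w_h for all h. -/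
/-!
Put `P = p^(j+1)` and `T = p^(j+k)`, so that `∑ m = 2T` and `P · ∑ w = T (P - p)`.
The lower bound on the `m h` caps the number of terms at `n ≤ 2T / (2P - 1)`, while summing
the slope constraints gives `(2P - 2p + 1)(2T - n) ≤ (4P - 4) ∑ w`. With the cap on `n` the left
side exceeds the right one by a multiple of `2T (2P - 2)(2P - p) > 0`.
-/

open Finset

theorem four_mul_sub_four_mul_lt_of_mul_eq {R : Type*} [CommRing R] [LinearOrder R]
    [IsStrictOrderedRing R] {p P T W n : R} (hP : 1 < P) (hpP : p ≤ P) (hT : 0 < T)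
    (hW : P * W = T * (P - p)) (hn : n * (2 * P - 1) ≤ 2 * T) :
    (4 * P - 4) * W < (2 * P - 2 * p + 1) * (2 * T - n) := by
  have hP0 : 0 < P * (2 * P - 1) := by nlinarith
  refine lt_of_mul_lt_mul_left ?_ hP0.le
  calc P * (2 * P - 1) * ((4 * P - 4) * W)
      = P * (2 * T * (2 * P - 1) - 2 * T) * (2 * P - 2 * p + 1)
        - 2 * T * (2 * P - 2) * (2 * P - p) := by linear_combination (2 * P - 1) * (4 * P - 4) * hW
    _ < P * (2 * T * (2 * P - 1) - 2 * T) * (2 * P - 2 * p + 1) := by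
        have : 0 < 2 * T * (2 * P - 2) * (2 * P - p) := by
          apply mul_pos (mul_pos _ _) <;> linarith
        linarith
    _ ≤ P * (2 * T * (2 * P - 1) - n * (2 * P - 1)) * (2 * P - 2 * p + 1) := by
        gcongr
        linarith
    _ = P * (2 * P - 1) * ((2 * P - 2 * p + 1) * (2 * T - n)) := by ring

theorem mul_sum_tsub_card_le_mul_sum {ι : Type*} (s : Finset ι) {f g : ι → ℕ} {a b : ℕ}
    (hf : ∀ i ∈ s, 1 ≤ f i) (hfg : ∀ i ∈ s, a * (f i - 1) ≤ b * g i) :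
    a * (∑ i ∈ s, f i - #s) ≤ b * ∑ i ∈ s, g i := by
  rw [card_eq_sum_ones, ← sum_tsub_distrib s hf, mul_sum, mul_sum]
  exact sum_le_sum hfg

theorem stmt4_general (p j k : ℕ) (hp : p.Prime) :
    ¬ ∃ (n : ℕ) (_ : 1 ≤ n) (m w : Fin n → ℕ),
      (∑ h, m h = 2 * p ^ (j + k)) ∧
      (∑ h, w h = p ^ k * (p ^ j - 1)) ∧
      (∀ h, 2 * p ^ (j + 1) - 1 ≤ m h) ∧
      (∀ h, p ^ (j + 1) - p + 1 ≤ w h) ∧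
      (∀ h, (2 * p ^ (j + 1) - 2 * p + 1) * (m h - 1) ≤ (4 * p ^ (j + 1) - 4) * w h) := by
  rintro ⟨n, -, m, w, hm, hw, hmlb, -, hslope⟩
  have hpP : p ≤ p ^ (j + 1) := le_self_pow hp.one_lt.le (Nat.succ_ne_zero j)
  have hP : 2 ≤ p ^ (j + 1) := hp.two_le.trans hpP
  have hm1 : ∀ h, 1 ≤ m h := fun h => (by omega : 1 ≤ 2 * p ^ (j + 1) - 1).trans (hmlb h)
  have hcard : n * (2 * p ^ (j + 1) - 1) ≤ 2 * p ^ (j + k) := by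
    simpa [hm] using card_nsmul_le_sum univ m _ fun h _ => hmlb h
  have hsum : (2 * p ^ (j + 1) - 2 * p + 1) * (2 * p ^ (j + k) - n)
      ≤ (4 * p ^ (j + 1) - 4) * (p ^ k * (p ^ j - 1)) := by
    simpa [hm, hw] using mul_sum_tsub_card_le_mul_sum univ (fun h _ => hm1 h) fun h _ => hslope h
  have hnT : n ≤ 2 * p ^ (j + k) := le_trans (Nat.le_mul_of_pos_right n (by omega)) hcard
  have hpj : 1 ≤ p ^ j := Nat.one_le_pow _ _ hp.pos
  zify [hnT, hpj, show 2 * p ≤ 2 * p ^ (j + 1) by omega, show 1 ≤ 2 * p ^ (j + 1) by omega,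
    show 4 ≤ 4 * p ^ (j + 1) by omega] at hcard hsum
  refine (four_mul_sub_four_mul_lt_of_mul_eq (by exact_mod_cast hP) (by exact_mod_cast hpP)
    (pow_pos (by exact_mod_cast hp.pos) _) ?_ hcard).not_ge hsum
  ring

/-- Arithmetic impossibility showing `(γ_{p^{k−1}}(μ_j))^p` supports no nontrivial
differential in the motivic Greenlees spectral sequence for `MHH(MZ/p)/τ^{p−1}`. -/
theorem stmt4 (p j k : ℕ) (hp : p.Prime) (hodd : Odd p) (hk : 1 ≤ k) :
    ¬ ∃ (n : ℕ) (_ : 1 ≤ n) (m w : Fin n → ℕ),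
      (∑ h, m h = 2 * p ^ (j + k)) ∧
      (∑ h, w h = p ^ k * (p ^ j - 1)) ∧
      (∀ h, 2 * p ^ (j + 1) - 1 ≤ m h) ∧
      (∀ h, p ^ (j + 1) - p + 1 ≤ w h) ∧
      (∀ h, (2 * p ^ (j + 1) - 2 * p + 1) * (m h - 1) ≤ (4 * p ^ (j + 1) - 4) * w h) :=
  stmt4_general p j k hp
end

section
/- Let p be an odd prime, j ≥ 1 and k ≥ 1 integers. There do not exist a positive integer n and natural numbers m_1, …, m_n, w_1, …, w_n satisfying: Σ_h m_h = (p^k − 1)·2p^j, Σ_h w_h = p^k(p^j − 1), m_1 ≥ 2p^{j+1} − 2p^j, w_1 ≥ p^{j+1} − p + 1, m_h ≥ 2p^{j+1} − 1 and w_h ≥ p^{j+1} − p + 1 for 2 ≤ h ≤ n, together with (2p^{j+1} − 2p + 1)(2p^j + m_1 − 2) ≤ (4p^{j+1} − 4) w_1 and (2p^{j+1} − 2p + 1)(m_h − 1) ≤ (4p^{j+1} − 4) w_h for 2 ≤ h ≤ n. -/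
/-!
Write `P = p^j`, `Q = p^{j+1} = pP`, `R = p^k`. Summing the slope inequalities
`(2Q - 2p + 1) ℓ_h ≤ (4Q - 4) w_h` over all factors, where the lengths `ℓ_1 = 2P + m_1 - 2` and
`ℓ_h = m_h - 1` add up to `2PR - n - 1` and the weights to `R(P - 1)`, gives
`(2Q - 2p + 1)(2PR - n - 1) ≤ 4(Q - 1)R(P - 1)`. The lower bounds on the `m_h` cap the number of
factors by `(n - 1)(2Q - 1) ≤ 2PR - 2Q`, and together these force
`(2Q - 2p + 1)(2PR - 1) ≤ 2R(P - 1)(2Q - 1)`, which fails: the right side falls short of the left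
by `2PR + 2(P - 1)(R - p) - 1 > 0`.
-/

open Finset

theorem Fintype.sum_add_le_sum_of_le_of_ne {ι M : Type*} [Fintype ι] [DecidableEq ι]
    [AddCommMonoid M] [PartialOrder M] [IsOrderedAddMonoid M] {f g : ι → M} {i₀ : ι} {a : M}
    (h₀ : f i₀ + a ≤ g i₀) (h : ∀ i ≠ i₀, f i ≤ g i) : ∑ i, f i + a ≤ ∑ i, g i := by
  have hsum : ∑ i, f i + a = ∑ i, (f i + if i = i₀ then a else 0) := by
    simp [sum_add_distrib]
  rw [hsum]
  refine sum_le_sum fun i _ => ?_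
  by_cases hi : i = i₀
  · subst hi; simpa using h₀
  · simpa [hi] using h i hi

namespace LongDifferential

theorem two_mul_weight_lt_slope_mul_length {p P R : ℤ} (hp : 1 ≤ p) (hP : 1 ≤ P) (hR : p ≤ R) :
    2 * R * (P - 1) * (2 * (p * P) - 1) < (2 * (p * P) - 2 * p + 1) * (2 * P * R - 1) := by
  nlinarith [mul_nonneg (sub_nonneg.2 hP) (sub_nonneg.2 hR),
    mul_pos (by omega : 0 < P) (by omega : 0 < R)]

theorem weight_lt_slope_mul_length_of_count_le {p P R x : ℤ} (hp : 2 ≤ p) (hP : 1 ≤ P)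
    (hR : p ≤ R) (hcount : x * (2 * (p * P) - 1) ≤ 2 * P * R - 2 * (p * P)) :
    (4 * (p * P) - 4) * (R * (P - 1)) < (2 * (p * P) - 2 * p + 1) * (2 * P * R - 2 - x) := by
  have htotal : (2 * (p * P) - 2) * (2 * P * R - 1) ≤ (2 * (p * P) - 1) * (2 * P * R - 2 - x) := by
    linarith
  have hcancel : 0 < 2 * (p * P) - 2 := by nlinarith
  nlinarith [two_mul_weight_lt_slope_mul_length (by omega) hP hR,
    mul_le_mul_of_nonneg_left htotal (by nlinarith : 0 ≤ 2 * (p * P) - 2 * p + 1)]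

theorem not_slope_bounds_of_sums {ι : Type*} [Fintype ι] [DecidableEq ι] {p P R : ℤ}
    (hp : 2 ≤ p) (hP : 1 ≤ P) (hR : p ≤ R) {m w : ι → ℤ} {i₀ : ι}
    (hm : ∑ i, m i = (R - 1) * (2 * P)) (hw : ∑ i, w i = R * (P - 1))
    (hm₀ : 2 * (p * P) - 2 * P ≤ m i₀)
    (hslope₀ : (2 * (p * P) - 2 * p + 1) * (2 * P + m i₀ - 2) ≤ (4 * (p * P) - 4) * w i₀)
    (hm_ne : ∀ i ≠ i₀, 2 * (p * P) - 1 ≤ m i)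
    (hslope_ne : ∀ i ≠ i₀, (2 * (p * P) - 2 * p + 1) * (m i - 1) ≤ (4 * (p * P) - 4) * w i) :
    False := by
  set A := 2 * (p * P) - 2 * p + 1
  set B := 4 * (p * P) - 4
  have hcount : (Fintype.card ι - 1 : ℤ) * (2 * (p * P) - 1) ≤ 2 * P * R - 2 * (p * P) := by
    have := Fintype.sum_add_le_sum_of_le_of_ne (f := fun _ => 2 * (p * P) - 1)
      (a := m i₀ - (2 * (p * P) - 1)) (by simp) hm_ne
    simp only [sum_const, card_univ, nsmul_eq_mul, hm] at this
    linarith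
  have hslope : A * (2 * P * R - 2 - (Fintype.card ι - 1)) ≤ B * (R * (P - 1)) := by
    have := Fintype.sum_add_le_sum_of_le_of_ne (f := fun i => A * (m i - 1))
      (g := fun i => B * w i) (a := A * (2 * P - 1)) (by linarith) hslope_ne
    simp only [← mul_sum, sum_sub_distrib, hm, hw, sum_const, card_univ, nsmul_eq_mul] at this
    linarith
  exact (weight_lt_slope_mul_length_of_count_le hp hP hR hcount).not_ge (by linarith)

end LongDifferential

theorem stmt5_general (p j k : ℕ) (hp : p.Prime) (hk : 1 ≤ k) :
    ¬ ∃ (n : ℕ) (hn : 0 < n) (m w : Fin n → ℕ),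
      (∑ h, m h = (p ^ k - 1) * (2 * p ^ j)) ∧
      (∑ h, w h = p ^ k * (p ^ j - 1)) ∧
      (2 * p ^ (j + 1) - 2 * p ^ j ≤ m ⟨0, hn⟩) ∧
      (p ^ (j + 1) - p + 1 ≤ w ⟨0, hn⟩) ∧
      ((2 * p ^ (j + 1) - 2 * p + 1) * (2 * p ^ j + m ⟨0, hn⟩ - 2)
          ≤ (4 * p ^ (j + 1) - 4) * w ⟨0, hn⟩) ∧
      (∀ h : Fin n, h ≠ ⟨0, hn⟩ →
        2 * p ^ (j + 1) - 1 ≤ m h ∧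
        p ^ (j + 1) - p + 1 ≤ w h ∧
        (2 * p ^ (j + 1) - 2 * p + 1) * (m h - 1) ≤ (4 * p ^ (j + 1) - 4) * w h) := by
  rintro ⟨n, hn, m, w, hm, hw, hm₀, -, hslope₀, hrest⟩
  have hp2 : 2 ≤ p := hp.two_le
  have hP : 1 ≤ p ^ j := Nat.one_le_pow _ _ (by omega)
  have hR : p ≤ p ^ k := Nat.le_self_pow (by omega) p
  have hpQ : p ≤ p * p ^ j := Nat.le_mul_of_pos_right p hP
  have hPQ : p ^ j ≤ p * p ^ j := Nat.le_mul_of_pos_left _ (by omega)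
  simp only [pow_succ'] at hm₀ hslope₀ hrest
  zify [show 1 ≤ p ^ k by omega, hP, show 2 * p ^ j ≤ 2 * (p * p ^ j) by omega,
    show 2 * p ≤ 2 * (p * p ^ j) by omega, show 2 ≤ 2 * p ^ j + m ⟨0, hn⟩ by omega,
    show 4 ≤ 4 * (p * p ^ j) by omega] at hm hw hm₀ hslope₀
  refine LongDifferential.not_slope_bounds_of_sums (p := p) (P := p ^ j) (R := p ^ k)
    (m := fun i => (m i : ℤ)) (w := fun i => (w i : ℤ)) (by exact_mod_cast hp2)
    (by exact_mod_cast hP) (by exact_mod_cast hR) hm hw hm₀ hslope₀ (fun i hi => ?_)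
    (fun i hi => ?_) <;>
  · obtain ⟨hmi, -, hslope⟩ := hrest i hi
    zify [show 1 ≤ 2 * (p * p ^ j) by omega, show 2 * p ≤ 2 * (p * p ^ j) by omega,
      show 1 ≤ m i by omega, show 4 ≤ 4 * (p * p ^ j) by omega] at hmi hslope
    assumption

/-- Arithmetic impossibility showing `γ_{p^k−1}(μ_j)·τ_j` supports no nontrivial long
differential in the Greenlees spectral sequence computing `π_{*,*}(MHH(MZ/p)/τ^{p−1})`. -/
theorem stmt5 (p j k : ℕ) (hp : p.Prime) (hodd : Odd p) (hj : 1 ≤ j) (hk : 1 ≤ k) :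
    ¬ ∃ (n : ℕ) (hn : 0 < n) (m w : Fin n → ℕ),
      (∑ h, m h = (p ^ k - 1) * (2 * p ^ j)) ∧
      (∑ h, w h = p ^ k * (p ^ j - 1)) ∧
      (2 * p ^ (j + 1) - 2 * p ^ j ≤ m ⟨0, hn⟩) ∧
      (p ^ (j + 1) - p + 1 ≤ w ⟨0, hn⟩) ∧
      ((2 * p ^ (j + 1) - 2 * p + 1) * (2 * p ^ j + m ⟨0, hn⟩ - 2)
          ≤ (4 * p ^ (j + 1) - 4) * w ⟨0, hn⟩) ∧
      (∀ h : Fin n, h ≠ ⟨0, hn⟩ →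
        2 * p ^ (j + 1) - 1 ≤ m h ∧
        p ^ (j + 1) - p + 1 ≤ w h ∧
        (2 * p ^ (j + 1) - 2 * p + 1) * (m h - 1) ≤ (4 * p ^ (j + 1) - 4) * w h) :=
  stmt5_general p j k hp hk
end

section
/- Let i ≥ 1 and j ≥ 1 be integers. There do not exist a positive integer n and natural numbers k_1, …, k_n, w_1, …, w_n with: Σ_l k_l = 2^{i+j+1}, Σ_l w_l = 2^i(2^j − 1), k_l ≥ 2^{j+2} − 1 for all l, w_l ≥ 2^{j+1} − 1 for all l, and k_l − 1 ≤ w_l(2 + 1/(2^j − 1)) for all l. -/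
/-!
Write `c = 2^j - 1` and `N = 2^i`. Summing `k_l - 1 ≤ w_l (2 + 1/c)` over `l` gives
`2N(c+1) - n ≤ Nc(2 + 1/c) ≤ N(2c + 1)`, so there are at least `N` differentials. Each has
length at least `4c + 3`, so their total length is at least `N(4c + 3) > 2N(c + 1)`.
-/

open Finset

theorem mul_two_add_one_div_le {K : Type*} [Field K] [LinearOrder K] [IsStrictOrderedRing K]
    (m : K) : m * (2 + 1 / m) ≤ 2 * m + 1 := by
  rw [mul_add, mul_one_div, mul_comm]
  exact add_le_add_right (div_self_le_one m) _

theorem sum_sub_card_le_sum_mul {ι K : Type*} [Fintype ι] [CommRing K] [PartialOrder K]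
    [IsOrderedRing K] (k w : ι → K) (a : K) (h : ∀ l, k l - 1 ≤ w l * a) :
    ∑ l, k l - Fintype.card ι ≤ (∑ l, w l) * a := by
  have hsum := sum_le_sum fun l (_ : l ∈ univ) ↦ h l
  rwa [sum_sub_distrib, sum_const, card_univ, nsmul_one, ← sum_mul] at hsum

theorem le_card_of_sum_sub_one_le {n N c : ℕ} (k w : Fin n → ℕ)
    (hk : ∑ l, k l = 2 * N * (c + 1)) (hw : ∑ l, w l = N * c)
    (h : ∀ l, (k l : ℚ) - 1 ≤ (w l : ℚ) * (2 + 1 / (c : ℚ))) : N ≤ n := by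
  have hsum := sum_sub_card_le_sum_mul (fun l ↦ (k l : ℚ)) (fun l ↦ (w l : ℚ)) _ h
  simp only [Fintype.card_fin] at hsum
  rw [← Nat.cast_sum, ← Nat.cast_sum, hk, hw] at hsum
  have hc := mul_two_add_one_div_le (c : ℚ)
  have hN : (0 : ℚ) ≤ N := N.cast_nonneg
  push_cast at hsum
  have : (N : ℚ) ≤ n := by nlinarith
  exact_mod_cast this

theorem not_sum_eq_of_le_card {n N c : ℕ} (hN : 0 < N) (hn : N ≤ n) (k : Fin n → ℕ)
    (hk_ge : ∀ l, 4 * c + 3 ≤ k l) : ∑ l, k l ≠ 2 * N * (c + 1) := by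
  have hsum : n * (4 * c + 3) ≤ ∑ l, k l := by
    simpa using card_nsmul_le_sum univ k _ fun l _ ↦ hk_ge l
  have : N * (4 * c + 3) ≤ n * (4 * c + 3) := Nat.mul_le_mul_right _ hn
  intro hk
  nlinarith

theorem stmt6_general (i j : ℕ) :
    ¬ ∃ (n : ℕ) (_ : 1 ≤ n) (k w : Fin n → ℕ),
      (∑ l, k l = 2 ^ (i + j + 1)) ∧
      (∑ l, w l = 2 ^ i * (2 ^ j - 1)) ∧
      (∀ l, 2 ^ (j + 2) - 1 ≤ k l) ∧
      (∀ l, 2 ^ (j + 1) - 1 ≤ w l) ∧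
      (∀ l, (k l : ℚ) - 1 ≤ (w l : ℚ) * (2 + 1 / ((2 : ℚ) ^ j - 1))) := by
  rintro ⟨n, -, k, w, hk, hw, hk_ge, -, h⟩
  obtain ⟨c, hc⟩ : ∃ c, 2 ^ j = c + 1 := ⟨2 ^ j - 1, (Nat.sub_add_cancel Nat.one_le_two_pow).symm⟩
  have hk' : ∑ l, k l = 2 * 2 ^ i * (c + 1) := by rw [hk, ← hc]; ring
  have hw' : ∑ l, w l = 2 ^ i * c := by rw [hw, hc, Nat.add_sub_cancel]
  have hk_ge' : ∀ l, 4 * c + 3 ≤ k l := fun l ↦ by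
    have := hk_ge l; rw [pow_succ, pow_succ, hc] at this; omega
  have h' : ∀ l, (k l : ℚ) - 1 ≤ (w l : ℚ) * (2 + 1 / (c : ℚ)) := by
    have : (2 : ℚ) ^ j - 1 = c := by rw [sub_eq_iff_eq_add]; exact_mod_cast hc
    simpa only [this] using h
  exact not_sum_eq_of_le_card (Nat.two_pow_pos i) (le_card_of_sum_sub_one_le k w hk' hw' h') k
    hk_ge' hk'

/-- Arithmetic contradiction used to prove `(γ_{2^{i−1}}(μ_j))^2 = 0` in
`π_{*,*}(MHH(MZ/2)/τ)`. -/
theorem stmt6 (i j : ℕ) (hi : 1 ≤ i) (hj : 1 ≤ j) :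
    ¬ ∃ (n : ℕ) (_ : 1 ≤ n) (k w : Fin n → ℕ),
      (∑ l, k l = 2 ^ (i + j + 1)) ∧
      (∑ l, w l = 2 ^ i * (2 ^ j - 1)) ∧
      (∀ l, 2 ^ (j + 2) - 1 ≤ k l) ∧
      (∀ l, 2 ^ (j + 1) - 1 ≤ w l) ∧
      (∀ l, (k l : ℚ) - 1 ≤ (w l : ℚ) * (2 + 1 / ((2 : ℚ) ^ j - 1))) :=
  stmt6_general i j
end

section
/- Let i ≥ 1 and j ≥ 1 be integers. There do not exist a positive integer n and natural numbers k_1, …, k_n, w_1, …, w_n with: Σ_l k_l = (2^i − 1)·2^{j+1}, Σ_l w_l = 2^i(2^j − 1), k_1 ≥ 2^{j+1} + 1, w_1 ≥ 2^{j+1} − 1, 2^{j+1} + k_1 − 2 ≤ w_1(2 + 1/(2^j − 1)), and for 2 ≤ l ≤ n: k_l ≥ 2^{j+2} − 1, w_l ≥ 2^{j+1} − 1, k_l − 1 ≤ w_l(2 + 1/(2^j − 1)). -/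
/-!
Write `b = 2^j` and `c = 2 + 1/(b - 1)`, so that `(b - 1) * c = 2b - 1`. Summing the inequalities
`k_l - 1 ≤ c w_l` (with the extra `2b - 1` on the left for `l = 1`) and inserting the two sums gives
`2^i (2b - 1) ≥ (2^i - 1) 2b - n + 2b - 1`, that is `n ≥ 2^i - 1`. On the other hand every `k_l` is
at least `2b`, and `k_1 > 2b`, so `(2^i - 1) 2b = ∑ k_l > 2b n`, that is `n < 2^i - 1`.
-/

namespace Finset

theorem sum_add_le_sum_of_add_le {ι M : Type*} [AddCommMonoid M] [PartialOrder M]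
    [IsOrderedAddMonoid M] {s : Finset ι} {a : ι} {f g : ι → M} {d : M} (ha : a ∈ s)
    (hfga : f a + d ≤ g a) (hfg : ∀ l ∈ s, l ≠ a → f l ≤ g l) :
    ∑ l ∈ s, f l + d ≤ ∑ l ∈ s, g l := by
  classical
  rw [← add_sum_erase s f ha, ← add_sum_erase s g ha, add_right_comm]
  exact add_le_add hfga (sum_le_sum fun l hl => hfg l (mem_of_mem_erase hl) (ne_of_mem_erase hl))

end Finset

theorem mul_two_add_one_div {K : Type*} [DivisionRing K] {x : K} (hx : x ≠ 0) :
    x * (2 + 1 / x) = 2 * x + 1 := by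
  rw [mul_add, mul_one_div_cancel hx, two_mul, mul_two]

theorem stmt7_general (i j : ℕ) (hj : 1 ≤ j) :
    ¬ ∃ (n : ℕ) (hn : 0 < n) (k w : Fin n → ℕ),
      (∑ l, k l = (2 ^ i - 1) * 2 ^ (j + 1)) ∧
      (∑ l, w l = 2 ^ i * (2 ^ j - 1)) ∧
      (2 ^ (j + 1) + 1 ≤ k ⟨0, hn⟩) ∧
      (2 ^ (j + 1) - 1 ≤ w ⟨0, hn⟩) ∧
      ((2 : ℚ) ^ (j + 1) + (k ⟨0, hn⟩ : ℚ) - 2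
          ≤ (w ⟨0, hn⟩ : ℚ) * (2 + 1 / ((2 : ℚ) ^ j - 1))) ∧
      (∀ l : Fin n, l ≠ ⟨0, hn⟩ →
        2 ^ (j + 2) - 1 ≤ k l ∧
        2 ^ (j + 1) - 1 ≤ w l ∧
        (k l : ℚ) - 1 ≤ (w l : ℚ) * (2 + 1 / ((2 : ℚ) ^ j - 1))) := by
  rintro ⟨n, hn, k, w, hk, hw, hk0, -, h0, hrest⟩
  set c : ℚ := 2 + 1 / ((2 : ℚ) ^ j - 1)
  have hk_sum : n * 2 ^ (j + 1) + 1 ≤ ∑ l, k l := by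
    have hpow : 2 ^ (j + 1) ≤ 2 ^ (j + 2) - 1 := by rw [pow_succ 2 (j + 1)]; omega
    simpa using Finset.sum_add_le_sum_of_add_le (f := fun _ => 2 ^ (j + 1)) (Finset.mem_univ _)
      hk0 fun l _ hl => hpow.trans (hrest l hl).1
  have hn_lt : (n : ℚ) + 1 < 2 ^ i := by
    have : n < 2 ^ i - 1 := Nat.lt_of_mul_lt_mul_right (hk ▸ hk_sum : n * 2 ^ (j + 1) < _)
    exact_mod_cast (by omega : n + 1 < 2 ^ i)
  have hkw_sum : ∑ l, ((k l : ℚ) - 1) + (2 ^ (j + 1) - 1) ≤ ∑ l, (w l : ℚ) * c :=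
    Finset.sum_add_le_sum_of_add_le (Finset.mem_univ _) (by linarith)
      fun l _ hl => (hrest l hl).2.2
  have hc : ((2 : ℚ) ^ j - 1) * c = 2 ^ (j + 1) - 1 := by
    have : (2 : ℚ) ^ j - 1 ≠ 0 := by
      linarith [pow_le_pow_right₀ (by norm_num : (1 : ℚ) ≤ 2) hj]
    rw [mul_two_add_one_div this, pow_succ]
    ring
  rw [Finset.sum_sub_distrib, ← Finset.sum_mul, ← Nat.cast_sum, ← Nat.cast_sum, hk, hw] at hkw_sum
  push_cast [Nat.one_le_two_pow] at hkw_sum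
  rw [mul_assoc, hc] at hkw_sum
  simp only [Finset.sum_const, Finset.card_univ, Fintype.card_fin, nsmul_eq_mul, mul_one]
    at hkw_sum
  linarith

/-- Arithmetic impossibility showing `γ_{2^i−1}(μ_j)·τ_j` supports no nontrivial
differential in the motivic Greenlees spectral sequence for `MHH(MZ/2)/τ`. -/
theorem stmt7 (i j : ℕ) (hi : 1 ≤ i) (hj : 1 ≤ j) :
    ¬ ∃ (n : ℕ) (hn : 0 < n) (k w : Fin n → ℕ),
      (∑ l, k l = (2 ^ i - 1) * 2 ^ (j + 1)) ∧
      (∑ l, w l = 2 ^ i * (2 ^ j - 1)) ∧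
      (2 ^ (j + 1) + 1 ≤ k ⟨0, hn⟩) ∧
      (2 ^ (j + 1) - 1 ≤ w ⟨0, hn⟩) ∧
      ((2 : ℚ) ^ (j + 1) + (k ⟨0, hn⟩ : ℚ) - 2
          ≤ (w ⟨0, hn⟩ : ℚ) * (2 + 1 / ((2 : ℚ) ^ j - 1))) ∧
      (∀ l : Fin n, l ≠ ⟨0, hn⟩ →
        2 ^ (j + 2) - 1 ≤ k l ∧
        2 ^ (j + 1) - 1 ≤ w l ∧
        (k l : ℚ) - 1 ≤ (w l : ℚ) * (2 + 1 / ((2 : ℚ) ^ j - 1))) :=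
  stmt7_general i j hj
end

section
/- Let R be a commutative ring of characteristic 2 and let Γ = R[x_k : k ≥ 0]/⟨x_k^2 : k ≥ 0⟩. For f ≥ 1 with binary expansion f = Σ_k e_k 2^k (e_k ∈ {0,1}), define γ_f = Π_{k : e_k = 1} x_k, and γ_0 = 1. Let D : Γ → Γ ⊗ R be the R-linear derivation-like map determined by D(x_k) = γ_{2^k − 1} ⊗ t for a fixed element t, extended by the Leibniz rule D(ab) = D(a)b + aD(b). Then D(γ_f) = γ_{f−1} ⊗ t for every f ≥ 1. -/
/-- In characteristic 2, the divided power `γ_f` is the product of the square-zero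
generators `x_k` indexed by the binary digits of `f`. -/
noncomputable def gammaTwo {A : Type*} [CommRing A] (x : ℕ → A) (f : ℕ) : A :=
  ∏ k ∈ Finset.range f, if f.testBit k then x k else 1

/-!
Split off the lowest binary digit: `γ_{2m} = γ'_m` and `γ_{2m+1} = x₀ γ'_m`, where `γ'` is built
from the shifted generators `x_{k+1}`. Since `2^(k+1) - 1 = 2(2^k - 1) + 1`, the shifted family
satisfies the same hypothesis with `t` replaced by `x₀ t`, so induction on `f` gives
`D γ'_m = γ'_{m-1} x₀ t = γ_{2m-1} t`. This settles even `f`; for `f = 2m + 1` the Leibniz rule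
gives `D γ_f = γ'_m t + x₀ D γ'_m`, and the second term contains `x₀² = 0`.
-/

open Finset

section BinaryDigits

variable {A : Type*} [CommRing A]

theorem gammaTwo_zero (x : ℕ → A) : gammaTwo x 0 = 1 :=
  prod_range_zero _

theorem gammaTwo_eq_prod_range_of_le (x : ℕ → A) {f N : ℕ} (h : f ≤ N) :
    gammaTwo x f = ∏ k ∈ range N, if f.testBit k then x k else 1 :=
  prod_subset (range_subset_range.2 h) fun k _ hk => by
    rw [Nat.testBit_eq_false_of_lt ((Nat.lt_two_pow_self).trans_le
      (Nat.pow_le_pow_right two_pos (not_lt.1 (mem_range.not.1 hk))))]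
    rfl

theorem gammaTwo_bit (x : ℕ → A) (b : Bool) (m : ℕ) :
    gammaTwo x (Nat.bit b m) = (if b then x 0 else 1) * gammaTwo (fun k => x (k + 1)) m := by
  rw [gammaTwo_eq_prod_range_of_le x (N := 2 * m + 1) (by cases b <;> simp [Nat.bit_val]),
    prod_range_succ', gammaTwo_eq_prod_range_of_le _ (N := 2 * m) (by omega)]
  simp only [Nat.testBit_bit_succ, Nat.testBit_bit_zero, mul_comm]

theorem gammaTwo_two_mul (x : ℕ → A) (m : ℕ) :
    gammaTwo x (2 * m) = gammaTwo (fun k => x (k + 1)) m := by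
  simpa using gammaTwo_bit x false m

theorem gammaTwo_two_mul_add_one (x : ℕ → A) (m : ℕ) :
    gammaTwo x (2 * m + 1) = x 0 * gammaTwo (fun k => x (k + 1)) m := by
  simpa using gammaTwo_bit x true m

theorem gammaTwo_two_pow_succ_sub_one (x : ℕ → A) (k : ℕ) :
    gammaTwo x (2 ^ (k + 1) - 1) = x 0 * gammaTwo (fun k => x (k + 1)) (2 ^ k - 1) := by
  rw [← gammaTwo_two_mul_add_one]
  congr 1
  have := Nat.one_le_two_pow (n := k)
  omega

end BinaryDigits

section Derivation

variable {R A : Type*} [CommRing R] [CommRing A] [Algebra R A]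

theorem Derivation.apply_succ_eq_gammaTwo {D : Derivation R A A} {x : ℕ → A} {t : A}
    (hD : ∀ k, D (x k) = gammaTwo x (2 ^ k - 1) * t) (k : ℕ) :
    D (x (k + 1)) = gammaTwo (fun k => x (k + 1)) (2 ^ k - 1) * (x 0 * t) := by
  rw [hD, gammaTwo_two_pow_succ_sub_one]
  ring

theorem Derivation.apply_gammaTwo (D : Derivation R A A) (x : ℕ → A) (t : A)
    (hx : ∀ k, x k ^ 2 = 0) (hD : ∀ k, D (x k) = gammaTwo x (2 ^ k - 1) * t)
    {f : ℕ} (hf : 1 ≤ f) : D (gammaTwo x f) = gammaTwo x (f - 1) * t := by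
  induction f using Nat.strong_induction_on generalizing x t with
  | _ f ih =>
  set y : ℕ → A := fun k => x (k + 1)
  have hy : ∀ m < f, 1 ≤ m → D (gammaTwo y m) = gammaTwo x (2 * (m - 1) + 1) * t :=
    fun m hm h1 => by
      rw [ih m hm y (x 0 * t) (fun k => hx (k + 1)) (D.apply_succ_eq_gammaTwo hD) h1,
        gammaTwo_two_mul_add_one]
      ring
  obtain ⟨m, rfl | rfl⟩ := Nat.even_or_odd' f
  · rw [gammaTwo_two_mul, hy m (by omega) (by omega)]
    congr 2
    omega
  · have hx0 : D (x 0) = t := by simpa [gammaTwo_zero] using hD 0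
    have hx0_mul : x 0 * D (gammaTwo y m) = 0 := by
      rcases Nat.eq_zero_or_pos m with rfl | hm
      · simp [gammaTwo_zero]
      · rw [hy m (by omega) hm, gammaTwo_two_mul_add_one, ← mul_assoc, ← mul_assoc, ← sq, hx 0,
          zero_mul, zero_mul]
    rw [gammaTwo_two_mul_add_one, D.leibniz, hx0, smul_eq_mul, smul_eq_mul, hx0_mul, zero_add,
      Nat.add_sub_cancel, gammaTwo_two_mul]

end Derivation

theorem stmt9_general (R A : Type*) [CommRing R] [CommRing A] [Algebra R A]
    (x : ℕ → A) (hx : ∀ k, x k ^ 2 = 0)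
    (D : Derivation R A A) (t : A)
    (hD : ∀ k, D (x k) = gammaTwo x (2 ^ k - 1) * t)
    (f : ℕ) (hf : 1 ≤ f) :
    D (gammaTwo x f) = gammaTwo x (f - 1) * t :=
  D.apply_gammaTwo x t hx hD hf

/-- Divided-power Leibniz computation in characteristic 2: any derivation with
`D(x_k) = γ_{2^k−1}·t` satisfies `D(γ_f) = γ_{f−1}·t`. -/
theorem stmt9 (R A : Type*) [CommRing R] [CharP R 2] [CommRing A] [Algebra R A]
    (x : ℕ → A) (hx : ∀ k, x k ^ 2 = 0)
    (D : Derivation R A A) (t : A)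
    (hD : ∀ k, D (x k) = gammaTwo x (2 ^ k - 1) * t)
    (f : ℕ) (hf : 1 ≤ f) :
    D (gammaTwo x f) = gammaTwo x (f - 1) * t :=
  stmt9_general R A x hx D t hD f hf
end
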